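/- arXiv:2504.03390 — 3 statements merged into one kernel-verified Lean document; each statement's English description precedes it below -/
import Mathlib

section
/- Suppose (H, c, ν) satisfies the Marchenko–Pastur relation. Then for every z ∈ 𝔻_{H,c}(∞): Φ_{H,c}(z) · s_ν(Φ_{H,c}(z)) = z · s_H(z); equivalently, s_ν(Φ_{H,c}(z)) = s_H(z) / (1 − c·z·s_H(z) − c). -/
open MeasureTheory Filter Complex Set

noncomputable section

/-- The Stieltjes transform of a measure on `ℝ`. -/
def St (μ : Measure ℝ) (z : ℂ) : ℂ := ∫ l, ((l : ℂ) - z)⁻¹ ∂μ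

/-- The (topological) support of a measure on `ℝ`. -/
def msupport (μ : Measure ℝ) : Set ℝ := {x : ℝ | ∀ U ∈ nhds x, 0 < μ U}

/-- `(H, c, ν)` satisfies the Marchenko–Pastur relation. -/
def MPRel (H : Measure ℝ) (c : ℝ) (ν : Measure ℝ) : Prop :=
  IsProbabilityMeasure H ∧ H ≠ Measure.dirac 0 ∧
  IsCompact (msupport H) ∧ msupport H ⊆ Set.Ici 0 ∧
  0 < c ∧
  IsProbabilityMeasure ν ∧ ν ≠ Measure.dirac 0 ∧
  IsCompact (msupport ν) ∧ msupport ν ⊆ Set.Ici 0 ∧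
  ∀ z : ℂ, 0 < z.im →
    St ν z = (∫ l, ((l : ℂ) * (1 - (c : ℂ) * z * St ν z - (c : ℂ)) - z)⁻¹ ∂H) ∧
    0 < ((c : ℂ) * St ν z + ((c : ℂ) - 1) / z).im

/-- The map `Φ_{H,c}`. -/
def Phi (H : Measure ℝ) (c : ℝ) (z : ℂ) : ℂ := (1 - (c : ℂ) * z * St H z - (c : ℂ)) * z

/-- The spectral domain `𝔻_{H,c}(∞)`. -/
def Dinf (H : Measure ℝ) (c : ℝ) : Set ℂ := {z : ℂ | 0 < z.im ∧ 0 < (Phi H c z).im}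

/-- The companion transform `s_ν̲`. -/
def sUnder (ν : Measure ℝ) (c : ℝ) (z : ℂ) : ℂ := (c : ℂ) * St ν z - (1 - (c : ℂ)) / z

/-- The map `φ_{ν,c}`. -/
def phiInv (ν : Measure ℝ) (c : ℝ) (z : ℂ) : ℂ := -1 / sUnder ν c z

end

/-! For `m ∈ ℂ⁺` let `g(m) = -1/m + c ∫ λ/(1+λm) dH(λ)`. Taking imaginary parts gives
`Im g(m) = Im m/|m|² · (1 - c ∫ |m λ/(1+λm)|² dH)`, so wherever `Im g(m) > 0` the integral
`c ∫ |m λ/(1+λm)|² dH` is `< 1`. If `g(m₁) = g(m₂)` with `m₁ ≠ m₂`, subtracting the two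
equations gives `c ∫ (m₁ λ/(1+λm₁))(m₂ λ/(1+λm₂)) dH = 1`, which AM-GM bounds by the average
of two numbers `< 1`; so `g` is injective on `{m ∈ ℂ⁺ | g(m) ∈ ℂ⁺}`.

The Marchenko–Pastur relation says exactly that `m = c s_ν(w) + (c-1)/w` solves `g(m) = w`
for `w ∈ ℂ⁺`, while a direct computation gives `g(-1/z) = Φ_{H,c}(z)`. Hence
`c s_ν(Φ(z)) + (c-1)/Φ(z) = -1/z` on `𝔻_{H,c}(∞)`, which rearranges to the claim.
-/

noncomputable def mpKernel (m : ℂ) (l : ℝ) : ℂ := l * (1 + l * m)⁻¹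

/-- The Silverstein–Choi inverse of the companion transform `sUnder`. -/
noncomputable def mpInv (H : Measure ℝ) (c : ℝ) (m : ℂ) : ℂ :=
  -1 / m + c * ∫ l, mpKernel m l ∂H

lemma ne_zero_of_im_pos {z : ℂ} (hz : 0 < z.im) : z ≠ 0 :=
  fun h => by simp [h] at hz

lemma im_neg_one_div_pos {z : ℂ} (hz : 0 < z.im) : 0 < (-1 / z).im := by
  rw [neg_div, one_div, neg_im, inv_im, neg_div, neg_neg]
  exact div_pos hz (normSq_pos.2 (ne_zero_of_im_pos hz))

lemma norm_integral_mul_le_half_add {α E : Type*} [MeasurableSpace α] {μ : Measure α}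
    [NormedRing E] [NormedSpace ℝ E] {F G : α → E}
    (hF : Integrable (fun x => ‖F x‖ ^ 2) μ) (hG : Integrable (fun x => ‖G x‖ ^ 2) μ) :
    ‖∫ x, F x * G x ∂μ‖ ≤ (∫ x, ‖F x‖ ^ 2 ∂μ + ∫ x, ‖G x‖ ^ 2 ∂μ) / 2 := by
  calc ‖∫ x, F x * G x ∂μ‖ ≤ ∫ x, ‖F x * G x‖ ∂μ := norm_integral_le_integral_norm _
    _ ≤ ∫ x, (‖F x‖ ^ 2 + ‖G x‖ ^ 2) / 2 ∂μ := by
      refine integral_mono_of_nonneg (ae_of_all _ fun x => norm_nonneg _)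
        ((hF.add hG).div_const 2) (ae_of_all _ fun x => ?_)
      nlinarith [norm_mul_le (F x) (G x), two_mul_le_add_sq ‖F x‖ ‖G x‖]
    _ = _ := by rw [integral_div, integral_add hF hG]

section kernel

variable {m : ℂ}

lemma one_add_ofReal_mul_ne_zero (hm : 0 < m.im) (l : ℝ) : 1 + l * m ≠ 0 := by
  intro h
  have hl : l = 0 := by
    have him := congrArg Complex.im h
    rw [add_im, one_im, im_ofReal_mul, zero_add, zero_im] at him
    exact (mul_eq_zero.1 him).resolve_right hm.ne'
  simp [hl] at h

lemma norm_mpKernel_le (hm : 0 < m.im) (l : ℝ) : ‖mpKernel m l‖ ≤ m.im⁻¹ := by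
  rw [mpKernel, norm_mul, norm_inv, norm_real, Real.norm_eq_abs, ← div_eq_mul_inv,
    div_le_iff₀ (norm_pos_iff.2 (one_add_ofReal_mul_ne_zero hm l)), inv_mul_eq_div,
    le_div_iff₀ hm]
  calc |l| * m.im = |(1 + l * m).im| := by simp [abs_mul, abs_of_pos hm]
    _ ≤ ‖1 + l * m‖ := abs_im_le_norm _

lemma measurable_mpKernel (m : ℂ) : Measurable (mpKernel m) := by
  unfold mpKernel; fun_prop

lemma integrable_mpKernel {μ : Measure ℝ} [IsFiniteMeasure μ] (hm : 0 < m.im) :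
    Integrable (mpKernel m) μ :=
  .of_bound (measurable_mpKernel m).aestronglyMeasurable _ (ae_of_all _ (norm_mpKernel_le hm))

lemma im_mpKernel (m : ℂ) (l : ℝ) : (mpKernel m l).im = -m.im * ‖mpKernel m l‖ ^ 2 := by
  rw [mpKernel, ← normSq_eq_norm_sq, normSq_mul, normSq_inv, normSq_ofReal, im_ofReal_mul,
    inv_im]
  simp
  ring

lemma inv_one_add_ofReal_mul (hm : 0 < m.im) (l : ℝ) :
    (1 + l * m)⁻¹ = 1 - m * mpKernel m l := by
  have := one_add_ofReal_mul_ne_zero hm l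
  rw [mpKernel]
  field_simp
  ring

lemma mpKernel_sub_mpKernel {m₁ m₂ : ℂ} (h₁ : 0 < m₁.im) (h₂ : 0 < m₂.im) (l : ℝ) :
    mpKernel m₁ l - mpKernel m₂ l = (m₂ - m₁) * (mpKernel m₁ l * mpKernel m₂ l) := by
  have := one_add_ofReal_mul_ne_zero h₁ l
  have := one_add_ofReal_mul_ne_zero h₂ l
  simp only [mpKernel]
  field_simp
  ring

end kernel

section mpInv

variable {H : Measure ℝ} {c : ℝ}

lemma mpInv_sub_mpInv [IsFiniteMeasure H] {m₁ m₂ : ℂ} (h₁ : 0 < m₁.im) (h₂ : 0 < m₂.im) :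
    mpInv H c m₁ - mpInv H c m₂ =
      (m₁ - m₂) * ((m₁ * m₂)⁻¹ - c * ∫ l, mpKernel m₁ l * mpKernel m₂ l ∂H) := by
  have hm₁ := ne_zero_of_im_pos h₁
  have hm₂ := ne_zero_of_im_pos h₂
  have hdiff : ∫ l, mpKernel m₁ l ∂H - ∫ l, mpKernel m₂ l ∂H =
      (m₂ - m₁) * ∫ l, mpKernel m₁ l * mpKernel m₂ l ∂H := by
    rw [← integral_sub (integrable_mpKernel h₁) (integrable_mpKernel h₂), ← integral_const_mul]
    exact integral_congr_ae (ae_of_all _ (mpKernel_sub_mpKernel h₁ h₂))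
  rw [mpInv, mpInv, add_sub_add_comm, ← mul_sub, hdiff]
  field_simp
  ring

lemma im_mpInv [IsFiniteMeasure H] {m : ℂ} (hm : 0 < m.im) :
    (mpInv H c m).im = m.im / normSq m * (1 - c * ∫ l, ‖m * mpKernel m l‖ ^ 2 ∂H) := by
  have hm0 := ne_zero_of_im_pos hm
  have hkernel : (∫ l, mpKernel m l ∂H).im = -m.im * ∫ l, ‖mpKernel m l‖ ^ 2 ∂H := by
    rw [← integral_const_mul]
    exact (integral_im (integrable_mpKernel hm)).symm.trans
      (integral_congr_ae (ae_of_all _ (im_mpKernel m)))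
  have hscale : ∫ l, ‖m * mpKernel m l‖ ^ 2 ∂H = normSq m * ∫ l, ‖mpKernel m l‖ ^ 2 ∂H := by
    rw [← integral_const_mul]
    simp only [norm_mul, mul_pow, ← normSq_eq_norm_sq]
  rw [mpInv, add_im, im_ofReal_mul, hkernel, hscale, neg_div, one_div, neg_im, inv_im]
  field_simp [normSq_pos.2 hm0 |>.ne']
  ring

lemma mul_integral_norm_mul_mpKernel_sq_lt_one [IsFiniteMeasure H] {m : ℂ} (hm : 0 < m.im)
    (hg : 0 < (mpInv H c m).im) : c * ∫ l, ‖m * mpKernel m l‖ ^ 2 ∂H < 1 := by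
  rw [im_mpInv hm] at hg
  have := (pos_iff_pos_of_mul_pos hg).1 (div_pos hm (normSq_pos.2 (ne_zero_of_im_pos hm)))
  linarith

lemma integrable_norm_mul_mpKernel_sq [IsFiniteMeasure H] {m : ℂ} (hm : 0 < m.im) :
    Integrable (fun l => ‖m * mpKernel m l‖ ^ 2) H := by
  refine .of_bound (((measurable_mpKernel m).const_mul m).norm.pow_const 2).aestronglyMeasurable
    ((‖m‖ * m.im⁻¹) ^ 2) (ae_of_all _ fun l => ?_)
  rw [norm_pow, norm_norm, norm_mul]
  gcongr
  exact norm_mpKernel_le hm l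

theorem mpInv_injOn [IsFiniteMeasure H] (hc : 0 ≤ c) :
    InjOn (mpInv H c) {m | 0 < m.im ∧ 0 < (mpInv H c m).im} := by
  rintro m₁ ⟨h₁, hg₁⟩ m₂ ⟨h₂, hg₂⟩ heq
  by_contra hne
  have hm₁ := ne_zero_of_im_pos h₁
  have hm₂ := ne_zero_of_im_pos h₂
  have hcross : (c : ℂ) * ∫ l, (m₁ * mpKernel m₁ l) * (m₂ * mpKernel m₂ l) ∂H = 1 := by
    have h := mpInv_sub_mpInv (c := c) (H := H) h₁ h₂
    rw [heq, sub_self, eq_comm, mul_eq_zero, sub_eq_zero, or_iff_right hne, sub_eq_zero] at h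
    simp_rw [mul_mul_mul_comm m₁, integral_const_mul, mul_left_comm (c : ℂ), ← h]
    exact mul_inv_cancel₀ (mul_ne_zero hm₁ hm₂)
  have hbound := norm_integral_mul_le_half_add (integrable_norm_mul_mpKernel_sq h₁ (H := H))
    (integrable_norm_mul_mpKernel_sq h₂)
  have hA₁ := mul_integral_norm_mul_mpKernel_sq_lt_one h₁ hg₁
  have hA₂ := mul_integral_norm_mul_mpKernel_sq_lt_one h₂ hg₂
  have hnorm := congrArg norm hcross
  rw [norm_mul, norm_real, Real.norm_eq_abs, abs_of_nonneg hc, norm_one] at hnorm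
  nlinarith [mul_le_mul_of_nonneg_left hbound hc]

end mpInv

section probability

variable {H : Measure ℝ} [IsProbabilityMeasure H] {c : ℝ}

lemma mpInv_eq_div {m : ℂ} (hm : 0 < m.im) :
    mpInv H c m = (c - 1 - c * ∫ l, (1 + l * m)⁻¹ ∂H) / m := by
  have hm0 := ne_zero_of_im_pos hm
  have hresolvent : ∫ l, (1 + l * m)⁻¹ ∂H = 1 - m * ∫ l, mpKernel m l ∂H := by
    rw [integral_congr_ae (ae_of_all _ (inv_one_add_ofReal_mul hm)),
      integral_sub (integrable_const 1) ((integrable_mpKernel hm).const_mul m),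
      integral_const_mul, integral_const, probReal_univ, one_smul]
  rw [mpInv, hresolvent]
  field_simp
  ring

lemma mpInv_eq_of_selfConsistent {w s : ℂ} (hw : w ≠ 0)
    (hm : 0 < ((c : ℂ) * s + ((c : ℂ) - 1) / w).im)
    (hs : s = ∫ l, ((l : ℂ) * (1 - c * w * s - c) - w)⁻¹ ∂H) :
    mpInv H c (c * s + (c - 1) / w) = w := by
  set m := (c : ℂ) * s + ((c : ℂ) - 1) / w with hm_def
  have hm0 := ne_zero_of_im_pos hm
  have hfactor : ∀ l : ℝ, ((l : ℂ) * (1 - c * w * s - c) - w)⁻¹ = -w⁻¹ * (1 + l * m)⁻¹ := by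
    intro l
    rw [← inv_neg, ← mul_inv, hm_def]
    congr 1
    field_simp
    ring
  rw [integral_congr_ae (ae_of_all _ hfactor), integral_const_mul] at hs
  set I := ∫ l, (1 + (l : ℂ) * m)⁻¹ ∂H
  have hmw : m * w = c - 1 - c * I := by
    rw [hm_def, hs]
    field_simp
    ring
  rw [mpInv_eq_div hm, ← hmw, mul_div_cancel_left₀ _ hm0]

lemma mpInv_neg_one_div_eq_Phi {z : ℂ} (hz : 0 < z.im) : mpInv H c (-1 / z) = Phi H c z := by
  have hz0 := ne_zero_of_im_pos hz
  have hresolvent : ∀ l : ℝ, (1 + l * (-1 / z))⁻¹ = -z * ((l : ℂ) - z)⁻¹ := by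
    intro l
    rw [← inv_inv (-z), ← mul_inv]
    congr 1
    field_simp
    ring
  rw [mpInv_eq_div (im_neg_one_div_pos hz), integral_congr_ae (ae_of_all _ hresolvent),
    integral_const_mul, ← St, Phi]
  field_simp
  ring

end probability

lemma mul_eq_and_eq_div_of_add_div_eq {c z S s : ℂ} (hc : c ≠ 0) (hz : z ≠ 0)
    (hw : 1 - c * z * S - c ≠ 0) (h : c * s + (c - 1) / ((1 - c * z * S - c) * z) = -1 / z) :
    (1 - c * z * S - c) * z * s = z * S ∧ s = S / (1 - c * z * S - c) := by
  have hs : (1 - c * z * S - c) * z * s = z * S := by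
    field_simp at h
    apply mul_left_cancel₀ (mul_ne_zero hc hz)
    linear_combination z * h
  refine ⟨hs, ?_⟩
  rw [eq_div_iff hw]
  apply mul_left_cancel₀ hz
  linear_combination hs

theorem stmt3 (H ν : MeasureTheory.Measure ℝ) (c : ℝ) (hMP : MPRel H c ν) :
    ∀ z ∈ Dinf H c,
      Phi H c z * St ν (Phi H c z) = z * St H z ∧
      St ν (Phi H c z) = St H z / (1 - (c : ℂ) * z * St H z - (c : ℂ)) := by
  obtain ⟨hH, -, -, -, hc, -, -, -, -, hrel⟩ := hMP
  rintro z ⟨hz, hΦ⟩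
  have hz0 := ne_zero_of_im_pos hz
  have hΦ0 := ne_zero_of_im_pos hΦ
  obtain ⟨hfix, him⟩ := hrel _ hΦ
  have hm : (c : ℂ) * St ν (Phi H c z) + (c - 1) / Phi H c z = -1 / z :=
    mpInv_injOn hc.le ⟨him, by rwa [mpInv_eq_of_selfConsistent hΦ0 him hfix]⟩
      ⟨im_neg_one_div_pos hz, by rwa [mpInv_neg_one_div_eq_Phi hz]⟩
      (by rw [mpInv_eq_of_selfConsistent hΦ0 him hfix, mpInv_neg_one_div_eq_Phi hz])
  exact mul_eq_and_eq_div_of_add_div_eq (ofReal_ne_zero.2 hc.ne') hz0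
    (left_ne_zero_of_mul hΦ0) hm
end

section
/- Let ν̂ be a probability measure on ℝ with compact support contained in [0,∞) and let c > 0. Define U = {z ∈ ℂ⁺ : there exists s ∈ ℂ⁺ which is a population-Stieltjes-estimator value at z for (ν̂, c)}. Then there exists a function ŝ : U → ℂ which is holomorphic on U (complex-differentiable at every point of U) such that for every z ∈ U, ŝ(z) ∈ ℂ⁺ and ŝ(z) is a population-Stieltjes-estimator value at z for (ν̂, c). -/
open MeasureTheory Filter Complex Set

/-- `s` is a population-Stieltjes-estimator value at `z` for `(ν, c)`. -/
def EstVal (ν : MeasureTheory.Measure ℝ) (c : ℝ) (z s : ℂ) : Prop :=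
  z * s + 1 = (∫ l, (l : ℂ) / ((l : ℂ) - (1 - (c : ℂ) * z * s - (c : ℂ)) * z) ∂ν) ∧
  0 < ((1 - (c : ℂ) * z * s - (c : ℂ)) * z).im ∧
  c * ‖z‖ * |(z * s).im| < ((1 - (c : ℂ) * z * s - (c : ℂ)) * z).im

/-!
Put `w = (1 - c z s - c) z` and `M(w) = ∫ λ / (λ - w) dν(λ)`. The estimator equation becomes
`z (1 - c M(w)) = w` and the side condition becomes `c |z| |Im M(w)| < Im w`. For `λ ≥ 0`,
`|λ / ((λ - w₁)(λ - w₂))|` is at most the mean of `Im (λ / (λ - wᵢ)) / Im wᵢ`, so under the side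
condition the divided difference of `M` satisfies `|c z (M(w₁) - M(w₂)) / (w₁ - w₂)| < 1`.
For `w₁ ≠ w₂` this gives uniqueness of the solution at a given `z`; for `w₁ = w₂` it shows that the
holomorphic map `w ↦ w / (1 - c M(w))`, which sends a solution `w` back to `z`, has non-zero
derivative there. Its local inverse is a holomorphic branch of solutions, and by uniqueness any
choice of solutions coincides with that branch near each point.
-/

open Topology

noncomputable section

def resolventMoment (ν : Measure ℝ) (w : ℂ) : ℂ := ∫ l, (l : ℂ) / ((l : ℂ) - w) ∂ν

def resolventMomentSlope (ν : Measure ℝ) (w₁ w₂ : ℂ) : ℂ :=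
  ∫ l, (l : ℂ) / (((l : ℂ) - w₁) * ((l : ℂ) - w₂)) ∂ν

def estArg (c : ℝ) (z s : ℂ) : ℂ := (1 - (c : ℂ) * z * s - (c : ℂ)) * z

def IsEstArg (ν : Measure ℝ) (c : ℝ) (z w : ℂ) : Prop :=
  0 < w.im ∧ z * (1 - c * resolventMoment ν w) = w ∧
    c * ‖z‖ * |(resolventMoment ν w).im| < w.im

def estArgInv (ν : Measure ℝ) (c : ℝ) (w : ℂ) : ℂ := w / (1 - c * resolventMoment ν w)

end

lemma ae_nonneg_of_msupport_subset_Ici {ν : Measure ℝ} (h : msupport ν ⊆ Ici 0) :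
    ∀ᵐ l ∂ν, 0 ≤ l := by
  have hsupp : msupport ν = ν.support := by
    ext x; exact (Measure.mem_support_iff_forall x).symm
  filter_upwards [Measure.support_mem_ae (μ := ν)] with l hl using h (hsupp ▸ hl)

section Resolvent

variable {δ : ℝ} {w x y : ℂ}

lemma im_le_norm_ofReal_sub (l : ℝ) (w : ℂ) : w.im ≤ ‖(l : ℂ) - w‖ :=
  calc w.im ≤ |((l : ℂ) - w).im| := by simp [le_abs_self]
    _ ≤ ‖(l : ℂ) - w‖ := abs_im_le_norm _

lemma ofReal_sub_ne_zero (l : ℝ) (hw : 0 < w.im) : (l : ℂ) - w ≠ 0 :=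
  norm_pos_iff.1 (hw.trans_le (im_le_norm_ofReal_sub l w))

lemma norm_inv_ofReal_sub_le (hδ : 0 < δ) (hx : δ ≤ x.im) (l : ℝ) :
    ‖((l : ℂ) - x)⁻¹‖ ≤ δ⁻¹ := by
  rw [norm_inv]
  exact inv_anti₀ hδ (hx.trans (im_le_norm_ofReal_sub l x))

lemma norm_div_ofReal_sub_le (hδ : 0 < δ) (hx : δ ≤ x.im) (l : ℝ) :
    ‖(l : ℂ) / ((l : ℂ) - x)‖ ≤ 1 + ‖x‖ * δ⁻¹ := by
  have hsplit : (l : ℂ) / ((l : ℂ) - x) = 1 + x * ((l : ℂ) - x)⁻¹ := by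
    field_simp [ofReal_sub_ne_zero l (hδ.trans_le hx)]
    ring
  rw [hsplit]
  refine (norm_add_le _ _).trans ?_
  rw [norm_one, norm_mul]
  gcongr
  exact norm_inv_ofReal_sub_le hδ hx l

lemma norm_div_ofReal_sub_mul_le (hδ : 0 < δ) (hx : δ ≤ x.im) (hy : δ ≤ y.im) (l : ℝ) :
    ‖(l : ℂ) / (((l : ℂ) - x) * ((l : ℂ) - y))‖ ≤ (1 + ‖x‖ * δ⁻¹) * δ⁻¹ := by
  rw [div_mul_eq_div_div, div_eq_mul_inv, norm_mul]
  exact mul_le_mul (norm_div_ofReal_sub_le hδ hx l) (norm_inv_ofReal_sub_le hδ hy l)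
    (norm_nonneg _) (by positivity)

lemma im_div_ofReal_sub_div_im (hw : 0 < w.im) (l : ℝ) :
    ((l : ℂ) / ((l : ℂ) - w)).im / w.im = l / ‖(l : ℂ) - w‖ ^ 2 := by
  rw [Complex.sq_norm, Complex.div_im]
  field_simp
  simp only [ofReal_im, ofReal_re, sub_im, sub_re, zero_sub, mul_neg, sub_neg_eq_add]
  ring

end Resolvent

section Moment

variable {ν : Measure ℝ} [IsFiniteMeasure ν] {w w₁ w₂ : ℂ}

lemma integrable_div_ofReal_sub (hw : 0 < w.im) :
    Integrable (fun l : ℝ => (l : ℂ) / ((l : ℂ) - w)) ν :=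
  .of_bound (Measurable.aestronglyMeasurable (by fun_prop)) _
    (.of_forall (norm_div_ofReal_sub_le hw le_rfl))

lemma resolventMoment_sub (h₁ : 0 < w₁.im) (h₂ : 0 < w₂.im) :
    resolventMoment ν w₁ - resolventMoment ν w₂ = (w₁ - w₂) * resolventMomentSlope ν w₁ w₂ := by
  rw [resolventMoment, resolventMoment, resolventMomentSlope, ← integral_const_mul,
    ← integral_sub (integrable_div_ofReal_sub h₁) (integrable_div_ofReal_sub h₂)]
  refine integral_congr_ae (.of_forall fun l => ?_)
  field_simp [ofReal_sub_ne_zero l h₁, ofReal_sub_ne_zero l h₂]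
  ring

lemma hasDerivAt_resolventMoment (hw : 0 < w.im) :
    HasDerivAt (resolventMoment ν) (resolventMomentSlope ν w w) w := by
  set δ := w.im / 2 with hδ_def
  have hδ : 0 < δ := half_pos hw
  have him : ∀ x ∈ Metric.ball w δ, δ ≤ x.im := fun x hx => by
    have := (abs_im_le_norm (x - w)).trans_lt (mem_ball_iff_norm.1 hx)
    rw [sub_im, abs_lt] at this
    linarith
  have hnorm : ∀ x ∈ Metric.ball w δ, ‖x‖ ≤ ‖w‖ + δ := fun x hx =>
    (norm_le_norm_add_norm_sub' x w).trans (by linarith [mem_ball_iff_norm.1 hx])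
  refine (hasDerivAt_integral_of_dominated_loc_of_deriv_le (Metric.ball_mem_nhds w hδ)
    (F := fun x (l : ℝ) => (l : ℂ) / ((l : ℂ) - x))
    (F' := fun x (l : ℝ) => (l : ℂ) / (((l : ℂ) - x) * ((l : ℂ) - x)))
    (bound := fun _ => (1 + (‖w‖ + δ) * δ⁻¹) * δ⁻¹)
    (.of_forall fun x => Measurable.aestronglyMeasurable (by fun_prop))
    (integrable_div_ofReal_sub hw) (Measurable.aestronglyMeasurable (by fun_prop))
    (.of_forall fun l x hx => ?_) (integrable_const _) (.of_forall fun l x hx => ?_)).2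
  · refine (norm_div_ofReal_sub_mul_le hδ (him x hx) (him x hx) l).trans ?_
    gcongr
    exact hnorm x hx
  · have hne := ofReal_sub_ne_zero l (hδ.trans_le (him x hx))
    exact ((hasDerivAt_const x (l : ℂ)).fun_div
      ((hasDerivAt_const x (l : ℂ)).fun_sub (hasDerivAt_id' x)) hne).congr_deriv (by ring)

lemma hasStrictDerivAt_resolventMoment (hw : 0 < w.im) :
    HasStrictDerivAt (resolventMoment ν) (resolventMomentSlope ν w w) w := by
  have hdiff : DifferentiableOn ℂ (resolventMoment ν) {w | 0 < w.im} := fun x hx =>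
    (hasDerivAt_resolventMoment hx).differentiableAt.differentiableWithinAt
  have := (hdiff.analyticAt (UpperHalfPlane.isOpen_upperHalfPlaneSet.mem_nhds hw)).hasStrictDerivAt
  rwa [(hasDerivAt_resolventMoment hw).deriv] at this

lemma norm_resolventMomentSlope_le (hae : ∀ᵐ l ∂ν, 0 ≤ l) (h₁ : 0 < w₁.im) (h₂ : 0 < w₂.im) :
    ‖resolventMomentSlope ν w₁ w₂‖ ≤
      ((resolventMoment ν w₁).im / w₁.im + (resolventMoment ν w₂).im / w₂.im) / 2 := by
  have hint : ∀ w : ℂ, 0 < w.im → Integrable (fun l : ℝ => ((l : ℂ) / ((l : ℂ) - w)).im) ν :=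
    fun w hw => (integrable_div_ofReal_sub hw).im
  have him : ∀ w : ℂ, 0 < w.im →
      ∫ l, ((l : ℂ) / ((l : ℂ) - w)).im ∂ν = (resolventMoment ν w).im :=
    fun w hw => integral_im (integrable_div_ofReal_sub hw)
  have hpt : ∀ᵐ l : ℝ ∂ν, ‖(l : ℂ) / (((l : ℂ) - w₁) * ((l : ℂ) - w₂))‖ ≤
      (((l : ℂ) / ((l : ℂ) - w₁)).im / w₁.im + ((l : ℂ) / ((l : ℂ) - w₂)).im / w₂.im) / 2 := by
    filter_upwards [hae] with l hl
    rw [im_div_ofReal_sub_div_im h₁, im_div_ofReal_sub_div_im h₂, norm_div, norm_mul, norm_real,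
      Real.norm_of_nonneg hl]
    have ha := (h₁.trans_le (im_le_norm_ofReal_sub l w₁)).ne'
    have hb := (h₂.trans_le (im_le_norm_ofReal_sub l w₂)).ne'
    have hamgm := mul_nonneg hl (sq_nonneg (‖(l : ℂ) - w₁‖⁻¹ - ‖(l : ℂ) - w₂‖⁻¹))
    field_simp at hamgm ⊢
    nlinarith [hamgm]
  calc ‖resolventMomentSlope ν w₁ w₂‖
      ≤ ∫ l, (((l : ℂ) / ((l : ℂ) - w₁)).im / w₁.im
          + ((l : ℂ) / ((l : ℂ) - w₂)).im / w₂.im) / 2 ∂ν :=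
        (norm_integral_le_integral_norm _).trans (integral_mono_of_nonneg
          (.of_forall fun _ => norm_nonneg _)
          (((hint w₁ h₁).div_const _).add ((hint w₂ h₂).div_const _) |>.div_const _) hpt)
    _ = _ := by
        rw [integral_div, integral_add ((hint w₁ h₁).div_const _) ((hint w₂ h₂).div_const _),
          integral_div, integral_div, him w₁ h₁, him w₂ h₂]

lemma one_add_mul_resolventMomentSlope_ne_zero (hae : ∀ᵐ l ∂ν, 0 ≤ l) {c : ℝ} (hc : 0 ≤ c) {z : ℂ}
    (h₁ : 0 < w₁.im) (h₂ : 0 < w₂.im) (hw₁ : c * ‖z‖ * |(resolventMoment ν w₁).im| < w₁.im)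
    (hw₂ : c * ‖z‖ * |(resolventMoment ν w₂).im| < w₂.im) :
    1 + c * z * resolventMomentSlope ν w₁ w₂ ≠ 0 := by
  have hcz : 0 ≤ c * ‖z‖ := by positivity
  have hlt : ∀ w : ℂ, 0 < w.im → c * ‖z‖ * |(resolventMoment ν w).im| < w.im →
      c * ‖z‖ * ((resolventMoment ν w).im / w.im) < 1 := fun w hw hlt => by
    rw [← mul_div_assoc, div_lt_one hw]
    exact (mul_le_mul_of_nonneg_left (le_abs_self _) hcz).trans_lt hlt
  have hsmall : ‖c * z * resolventMomentSlope ν w₁ w₂‖ < 1 :=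
    calc ‖c * z * resolventMomentSlope ν w₁ w₂‖
        = c * ‖z‖ * ‖resolventMomentSlope ν w₁ w₂‖ := by
          rw [norm_mul, norm_mul, norm_real, Real.norm_of_nonneg hc]
      _ ≤ c * ‖z‖ * (((resolventMoment ν w₁).im / w₁.im
          + (resolventMoment ν w₂).im / w₂.im) / 2) := by
          gcongr; exact norm_resolventMomentSlope_le hae h₁ h₂
      _ < 1 := by linarith [hlt w₁ h₁ hw₁, hlt w₂ h₂ hw₂]
  intro h
  rw [eq_neg_of_add_eq_zero_right h, norm_neg, norm_one] at hsmall
  exact lt_irrefl _ hsmall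

end Moment

section Estimator

variable {ν : Measure ℝ} {c : ℝ} {z s w : ℂ}

lemma estVal_iff : EstVal ν c z s ↔ z * s + 1 = resolventMoment ν (estArg c z s) ∧
    0 < (estArg c z s).im ∧ c * ‖z‖ * |(z * s).im| < (estArg c z s).im :=
  Iff.rfl

lemma estArg_injective (hc : c ≠ 0) (hz : z ≠ 0) : Function.Injective (estArg c z) := by
  intro s₁ s₂ h
  refine mul_left_cancel₀ (mul_ne_zero (mul_ne_zero (ofReal_ne_zero.2 hc) hz) hz) ?_
  unfold estArg at h
  linear_combination -h

lemma IsEstArg.ne_zero (h : IsEstArg ν c z w) : z ≠ 0 := by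
  rintro rfl
  have hw := h.2.1
  rw [zero_mul] at hw
  simpa [← hw] using h.1

lemma EstVal.isEstArg (h : EstVal ν c z s) : IsEstArg ν c z (estArg c z s) := by
  obtain ⟨heq, him, hlt⟩ := estVal_iff.1 h
  refine ⟨him, ?_, ?_⟩
  · rw [← heq, estArg]; ring
  · rwa [← heq, add_im, one_im, add_zero]

lemma IsEstArg.estVal (h : IsEstArg ν c z w) : EstVal ν c z ((resolventMoment ν w - 1) / z) := by
  have hzs : z * ((resolventMoment ν w - 1) / z) = resolventMoment ν w - 1 :=
    mul_div_cancel₀ _ h.ne_zero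
  obtain ⟨him, heq, hlt⟩ := h
  have harg : estArg c z ((resolventMoment ν w - 1) / z) = w := by
    rw [estArg]; linear_combination (-(c : ℂ) * z) * hzs + heq
  rw [estVal_iff, harg, hzs, sub_add_cancel, sub_im, one_im, sub_zero]
  exact ⟨rfl, him, hlt⟩

lemma IsEstArg.unique [IsFiniteMeasure ν] (hae : ∀ᵐ l ∂ν, 0 ≤ l) (hc : 0 ≤ c) {w₁ w₂ : ℂ}
    (h₁ : IsEstArg ν c z w₁) (h₂ : IsEstArg ν c z w₂) : w₁ = w₂ := by
  have hfactor : (w₁ - w₂) * (1 + c * z * resolventMomentSlope ν w₁ w₂) = 0 := by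
    linear_combination -(c : ℂ) * z * resolventMoment_sub (ν := ν) h₁.1 h₂.1 - h₁.2.1 + h₂.2.1
  refine sub_eq_zero.1 ((mul_eq_zero.1 hfactor).resolve_right ?_)
  exact one_add_mul_resolventMomentSlope_ne_zero hae hc h₁.1 h₂.1 h₁.2.2 h₂.2.2

lemma EstVal.unique [IsFiniteMeasure ν] (hae : ∀ᵐ l ∂ν, 0 ≤ l) (hc : 0 < c) {s₁ s₂ : ℂ}
    (h₁ : EstVal ν c z s₁) (h₂ : EstVal ν c z s₂) : s₁ = s₂ :=
  estArg_injective hc.ne' h₁.isEstArg.ne_zero (h₁.isEstArg.unique hae hc.le h₂.isEstArg)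

lemma estArgInv_eq_iff (hz : z ≠ 0) (hw : w ≠ 0) :
    estArgInv ν c w = z ↔ z * (1 - c * resolventMoment ν w) = w := by
  by_cases hd : 1 - c * resolventMoment ν w = 0
  · simp [estArgInv, hd, eq_comm, hz, hw]
  · rw [estArgInv, div_eq_iff hd, eq_comm]

lemma hasStrictDerivAt_estArgInv [IsFiniteMeasure ν] (hw : 0 < w.im)
    (hd : 1 - c * resolventMoment ν w ≠ 0) :
    HasStrictDerivAt (estArgInv ν c)
      ((1 - c * resolventMoment ν w + c * w * resolventMomentSlope ν w w) /
        (1 - c * resolventMoment ν w) ^ 2) w :=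
  ((hasStrictDerivAt_id w).div
    (((hasStrictDerivAt_resolventMoment hw).const_mul (c : ℂ)).const_sub 1) hd).congr_deriv
    (by rw [id_eq]; ring)

lemma IsEstArg.exists_local_inverse [IsFiniteMeasure ν] (hae : ∀ᵐ l ∂ν, 0 ≤ l) (hc : 0 ≤ c)
    {z₀ w₀ : ℂ} (h : IsEstArg ν c z₀ w₀) :
    ∃ g : ℂ → ℂ, DifferentiableAt ℂ g z₀ ∧ g z₀ = w₀ ∧ ∀ᶠ z in 𝓝 z₀, IsEstArg ν c z (g z) := by
  have hz₀ := h.ne_zero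
  obtain ⟨him, heq, hlt⟩ := h
  have hw₀ : w₀ ≠ 0 := fun h0 => by simp [h0] at him
  have hd : 1 - c * resolventMoment ν w₀ ≠ 0 := right_ne_zero_of_mul (heq ▸ hw₀)
  have hinv : estArgInv ν c w₀ = z₀ := (estArgInv_eq_iff hz₀ hw₀).2 heq
  have hφ := hasStrictDerivAt_estArgInv him hd
  have hφ' : (1 - c * resolventMoment ν w₀ + c * w₀ * resolventMomentSlope ν w₀ w₀) /
      (1 - c * resolventMoment ν w₀) ^ 2 ≠ 0 := by
    refine div_ne_zero (fun h0 => ?_) (pow_ne_zero 2 hd)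
    have hnum : z₀ * (1 - c * resolventMoment ν w₀ + c * w₀ * resolventMomentSlope ν w₀ w₀) =
        w₀ * (1 + c * z₀ * resolventMomentSlope ν w₀ w₀) := by
      linear_combination heq
    rw [h0, mul_zero] at hnum
    exact mul_ne_zero hw₀ (one_add_mul_resolventMomentSlope_ne_zero hae hc him him hlt hlt)
      hnum.symm
  set g := hφ.localInverse _ _ _ hφ'
  have hg₀ : g z₀ = w₀ := hinv ▸ (hφ.eventually_left_inverse hφ').self_of_nhds
  have hg : DifferentiableAt ℂ g z₀ :=
    hinv ▸ (hφ.to_localInverse hφ').hasDerivAt.differentiableAt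
  have hM : ContinuousAt (resolventMoment ν) (g z₀) := by
    rw [hg₀]; exact (hasDerivAt_resolventMoment him).continuousAt
  have hMg : ContinuousAt (fun z => resolventMoment ν (g z)) z₀ := hM.comp hg.continuousAt
  have him_ev : ∀ᶠ z in 𝓝 z₀, 0 < (g z).im :=
    continuousAt_const.eventually_lt (continuous_im.continuousAt.comp hg.continuousAt)
      (by simpa [hg₀] using him)
  have hlt_ev : ∀ᶠ z in 𝓝 z₀, c * ‖z‖ * |(resolventMoment ν (g z)).im| < (g z).im :=
    ContinuousAt.eventually_lt (by fun_prop) (continuous_im.continuousAt.comp hg.continuousAt)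
      (by simpa [hg₀] using hlt)
  have hright := hφ.eventually_right_inverse hφ'
  rw [hinv] at hright
  refine ⟨g, hg, hg₀, ?_⟩
  filter_upwards [him_ev, hlt_ev, hright, eventually_ne_nhds hz₀] with z hgz_im hgz_lt hgz hz
  exact ⟨hgz_im, (estArgInv_eq_iff hz (fun h0 => by simp [h0] at hgz_im)).1 hgz, hgz_lt⟩

lemma EstVal.exists_local_branch [IsFiniteMeasure ν] (hae : ∀ᵐ l ∂ν, 0 ≤ l) (hc : 0 ≤ c)
    {z₀ s₀ : ℂ} (h : EstVal ν c z₀ s₀) :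
    ∃ S : ℂ → ℂ, DifferentiableAt ℂ S z₀ ∧ ∀ᶠ z in 𝓝 z₀, EstVal ν c z (S z) := by
  obtain ⟨g, hg, hg₀, hg_ev⟩ := h.isEstArg.exists_local_inverse hae hc
  refine ⟨fun z => (resolventMoment ν (g z) - 1) / z, ?_, hg_ev.mono fun z hz => hz.estVal⟩
  have hM : DifferentiableAt ℂ (resolventMoment ν) (g z₀) :=
    (hasDerivAt_resolventMoment (hg₀ ▸ h.isEstArg.1)).differentiableAt
  exact ((hM.comp z₀ hg).sub_const 1).div differentiableAt_id h.isEstArg.ne_zero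

end Estimator

theorem stmt8_general (ν : MeasureTheory.Measure ℝ) (hprob : IsProbabilityMeasure ν)
    (hpos : msupport ν ⊆ Set.Ici 0)
    (c : ℝ) (hc : 0 < c) :
    ∃ shat : ℂ → ℂ,
      ∀ z ∈ {z : ℂ | 0 < z.im ∧ ∃ s : ℂ, 0 < s.im ∧ EstVal ν c z s},
        DifferentiableAt ℂ shat z ∧ 0 < (shat z).im ∧ EstVal ν c z (shat z) := by
  have hae := ae_nonneg_of_msupport_subset_Ici hpos
  have hshat : ∀ z s, EstVal ν c z s → Classical.epsilon (EstVal ν c z) = s := fun z s hs =>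
    (Classical.epsilon_spec ⟨s, hs⟩).unique hae hc hs
  refine ⟨fun z => Classical.epsilon (EstVal ν c z), ?_⟩
  rintro z ⟨-, s, hs_im, hs⟩
  beta_reduce
  obtain ⟨S, hS, hS_ev⟩ := hs.exists_local_branch hae hc.le
  refine ⟨hS.congr_of_eventuallyEq ?_, by rwa [hshat z s hs], by rwa [hshat z s hs]⟩
  filter_upwards [hS_ev] with z' hz' using hshat z' (S z') hz'

theorem stmt8 (ν : MeasureTheory.Measure ℝ) (hprob : IsProbabilityMeasure ν)
    (hcomp : IsCompact (msupport ν)) (hpos : msupport ν ⊆ Set.Ici 0)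
    (c : ℝ) (hc : 0 < c) :
    ∃ shat : ℂ → ℂ,
      ∀ z ∈ {z : ℂ | 0 < z.im ∧ ∃ s : ℂ, 0 < s.im ∧ EstVal ν c z s},
        DifferentiableAt ℂ shat z ∧ 0 < (shat z).im ∧ EstVal ν c z (shat z) :=
  stmt8_general ν hprob hpos c hc
end

section
/- Let H be a probability measure on ℝ with compact support contained in [0,∞) and let c > 0. Then: (i) for every z ∈ 𝔻_{H,c}(∞), c·∫_ℝ λ²/|λ − z|² dH(λ) < 1; and (ii) for all z₁, z₂ in 𝔻_{H,c}(∞) ∪ {z̄ : z ∈ 𝔻_{H,c}(∞)}, the Cauchy–Schwarz bound |c·∫_ℝ λ²/((λ − z₁)(λ − z₂)) dH(λ)| < 1 holds. -/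
open MeasureTheory Filter Complex Set

noncomputable section

/-!
Writing `g_z(λ) = λ / (λ - z)`, one has `1 - c - c z s_H(z) = 1 - c ∫ g_z dH`, so
`Φ_{H,c}(z) = z (1 - c ∫ g_z dH)`, and `Im (z g_z(λ)) = Im z · |g_z(λ)|²`. Hence
`Im Φ_{H,c}(z) = Im z · (1 - c ∫ λ² / |λ - z|² dH)`, which gives (i); the integral is invariant
under `z ↦ z̄`. For (ii), `|g_{z₁} g_{z₂}| ≤ (|g_{z₁}|² + |g_{z₂}|²) / 2` pointwise, so the
modulus in question is at most the average of the two quantities bounded by (i).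
-/

section Resolvent

variable {z : ℂ}

lemma ofReal_sub_ne_zero_s17 (hz : z.im ≠ 0) (l : ℝ) : (l : ℂ) - z ≠ 0 :=
  fun h => hz (by simpa using congrArg Complex.im h)

lemma norm_inv_ofReal_sub_le_s17 (hz : z.im ≠ 0) (l : ℝ) : ‖((l : ℂ) - z)⁻¹‖ ≤ |z.im|⁻¹ := by
  rw [norm_inv]
  refine inv_anti₀ (abs_pos.mpr hz) ?_
  simpa using Complex.abs_im_le_norm ((l : ℂ) - z)

lemma ofReal_div_sub_eq (hz : z.im ≠ 0) (l : ℝ) :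
    (l : ℂ) / ((l : ℂ) - z) = 1 + z * ((l : ℂ) - z)⁻¹ := by
  field_simp [ofReal_sub_ne_zero_s17 hz l]
  ring

lemma norm_ofReal_div_sub_le (hz : z.im ≠ 0) (l : ℝ) :
    ‖(l : ℂ) / ((l : ℂ) - z)‖ ≤ 1 + ‖z‖ * |z.im|⁻¹ := by
  rw [ofReal_div_sub_eq hz]
  calc ‖1 + z * ((l : ℂ) - z)⁻¹‖ ≤ ‖(1 : ℂ)‖ + ‖z‖ * ‖((l : ℂ) - z)⁻¹‖ :=
        (norm_add_le _ _).trans_eq (by rw [norm_mul])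
    _ ≤ 1 + ‖z‖ * |z.im|⁻¹ := by
        gcongr
        · simp
        · exact norm_inv_ofReal_sub_le_s17 hz l

lemma sq_div_norm_sub_sq (z : ℂ) (l : ℝ) :
    l ^ 2 / ‖(l : ℂ) - z‖ ^ 2 = ‖(l : ℂ) / ((l : ℂ) - z)‖ ^ 2 := by
  rw [norm_div, div_pow, Complex.norm_real, Real.norm_eq_abs, sq_abs]

lemma im_mul_ofReal_div_sub (z : ℂ) (l : ℝ) :
    (z * ((l : ℂ) / ((l : ℂ) - z))).im = z.im * (l ^ 2 / ‖(l : ℂ) - z‖ ^ 2) := by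
  rw [Complex.sq_norm, mul_div_assoc', Complex.div_im]
  simp only [Complex.normSq_apply, Complex.mul_re, Complex.mul_im, Complex.sub_re,
    Complex.sub_im, Complex.ofReal_re, Complex.ofReal_im]
  ring

lemma integral_sq_div_norm_sub_conj (H : Measure ℝ) (z : ℂ) :
    ∫ l, l ^ 2 / ‖(l : ℂ) - starRingEnd ℂ z‖ ^ 2 ∂H = ∫ l, l ^ 2 / ‖(l : ℂ) - z‖ ^ 2 ∂H := by
  congr 1 with l
  rw [← Complex.norm_conj, map_sub, Complex.conj_ofReal, Complex.conj_conj]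

end Resolvent

section Integrability

variable {H : Measure ℝ} [IsFiniteMeasure H] {z : ℂ}

lemma continuous_ofReal_sub (z : ℂ) : Continuous fun l : ℝ => (l : ℂ) - z :=
  continuous_ofReal.sub continuous_const

lemma integrable_inv_ofReal_sub (hz : z.im ≠ 0) :
    Integrable (fun l : ℝ => ((l : ℂ) - z)⁻¹) H :=
  .of_bound ((continuous_ofReal_sub z).inv₀ (ofReal_sub_ne_zero_s17 hz)).aestronglyMeasurable _
    (.of_forall (norm_inv_ofReal_sub_le_s17 hz))

lemma integrable_ofReal_div_sub (hz : z.im ≠ 0) :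
    Integrable (fun l : ℝ => (l : ℂ) / ((l : ℂ) - z)) H := by
  simp_rw [ofReal_div_sub_eq hz]
  exact (integrable_const 1).add ((integrable_inv_ofReal_sub hz).const_mul z)

lemma integrable_sq_div_norm_sub_sq (hz : z.im ≠ 0) :
    Integrable (fun l : ℝ => l ^ 2 / ‖(l : ℂ) - z‖ ^ 2) H := by
  refine .of_bound (by fun_prop : Measurable _).aestronglyMeasurable ((1 + ‖z‖ * |z.im|⁻¹) ^ 2)
    (.of_forall fun l => ?_)
  rw [sq_div_norm_sub_sq, Real.norm_of_nonneg (by positivity)]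
  gcongr
  exact norm_ofReal_div_sub_le hz l

end Integrability

lemma Phi_eq_mul_integral (H : Measure ℝ) [IsProbabilityMeasure H] (c : ℝ) {z : ℂ}
    (hz : z.im ≠ 0) :
    Phi H c z = z * (1 - c * ∫ l, (l : ℂ) / ((l : ℂ) - z) ∂H) := by
  simp_rw [ofReal_div_sub_eq hz]
  rw [integral_add (integrable_const 1) ((integrable_inv_ofReal_sub hz).const_mul z),
    integral_const_mul, Phi, St]
  simp only [integral_const, probReal_univ, one_smul]
  ring

lemma im_Phi (H : Measure ℝ) [IsProbabilityMeasure H] (c : ℝ) {z : ℂ} (hz : z.im ≠ 0) :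
    (Phi H c z).im = z.im * (1 - c * ∫ l, l ^ 2 / ‖(l : ℂ) - z‖ ^ 2 ∂H) := by
  have hint : Integrable (fun l : ℝ => z * ((l : ℂ) / ((l : ℂ) - z))) H :=
    (integrable_ofReal_div_sub hz).const_mul z
  have him : (z * ∫ l, (l : ℂ) / ((l : ℂ) - z) ∂H).im
      = z.im * ∫ l, l ^ 2 / ‖(l : ℂ) - z‖ ^ 2 ∂H := by
    rw [← integral_const_mul, ← integral_const_mul]
    simp only [← im_mul_ofReal_div_sub]
    exact (integral_im hint).symm
  rw [Phi_eq_mul_integral H c hz, mul_sub, mul_one, mul_left_comm, Complex.sub_im,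
    Complex.im_ofReal_mul, him]
  ring

lemma mul_integral_sq_div_norm_sub_sq_lt_one (H : Measure ℝ) [IsProbabilityMeasure H] {c : ℝ}
    {z : ℂ} (hz : z ∈ Dinf H c) : c * ∫ l, l ^ 2 / ‖(l : ℂ) - z‖ ^ 2 ∂H < 1 := by
  obtain ⟨hz_im, hPhi⟩ := hz
  rw [im_Phi H c hz_im.ne'] at hPhi
  linarith [pos_of_mul_pos_right hPhi hz_im.le]

lemma norm_sq_div_mul_le (z₁ z₂ : ℂ) (l : ℝ) :
    ‖(l : ℂ) ^ 2 / (((l : ℂ) - z₁) * ((l : ℂ) - z₂))‖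
      ≤ (l ^ 2 / ‖(l : ℂ) - z₁‖ ^ 2 + l ^ 2 / ‖(l : ℂ) - z₂‖ ^ 2) / 2 := by
  rw [sq_div_norm_sub_sq, sq_div_norm_sub_sq, sq, mul_div_mul_comm, norm_mul]
  linarith [two_mul_le_add_sq ‖(l : ℂ) / ((l : ℂ) - z₁)‖ ‖(l : ℂ) / ((l : ℂ) - z₂)‖]

lemma norm_mul_integral_sq_div_mul_lt_one (H : Measure ℝ) [IsFiniteMeasure H] {c : ℝ}
    (hc : 0 ≤ c) {z₁ z₂ : ℂ} (hz₁ : z₁.im ≠ 0) (hz₂ : z₂.im ≠ 0)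
    (h₁ : c * ∫ l, l ^ 2 / ‖(l : ℂ) - z₁‖ ^ 2 ∂H < 1)
    (h₂ : c * ∫ l, l ^ 2 / ‖(l : ℂ) - z₂‖ ^ 2 ∂H < 1) :
    ‖(c : ℂ) * ∫ l, (l : ℂ) ^ 2 / (((l : ℂ) - z₁) * ((l : ℂ) - z₂)) ∂H‖ < 1 := by
  have hint₁ := integrable_sq_div_norm_sub_sq (H := H) hz₁
  have hint₂ := integrable_sq_div_norm_sub_sq (H := H) hz₂
  have hbound : ‖∫ l, (l : ℂ) ^ 2 / (((l : ℂ) - z₁) * ((l : ℂ) - z₂)) ∂H‖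
      ≤ ((∫ l, l ^ 2 / ‖(l : ℂ) - z₁‖ ^ 2 ∂H) + ∫ l, l ^ 2 / ‖(l : ℂ) - z₂‖ ^ 2 ∂H) / 2 := by
    rw [← integral_add hint₁ hint₂, ← integral_div]
    exact norm_integral_le_of_norm_le ((hint₁.add hint₂).div_const 2)
      (.of_forall (norm_sq_div_mul_le z₁ z₂))
  rw [norm_mul, Complex.norm_real, Real.norm_of_nonneg hc]
  linarith [mul_le_mul_of_nonneg_left hbound hc]

theorem stmt17_general (H : MeasureTheory.Measure ℝ) (hprob : IsProbabilityMeasure H)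
    (c : ℝ) (hc : 0 < c) :
    (∀ z ∈ Dinf H c,
      c * (∫ l, l ^ 2 / ‖(l : ℂ) - z‖ ^ 2 ∂H) < 1) ∧
    ∀ z₁ ∈ Dinf H c ∪ (starRingEnd ℂ) '' Dinf H c,
      ∀ z₂ ∈ Dinf H c ∪ (starRingEnd ℂ) '' Dinf H c,
        ‖(c : ℂ) *
          ∫ l, (l : ℂ) ^ 2 / (((l : ℂ) - z₁) * ((l : ℂ) - z₂)) ∂H‖ < 1 := by
  have hDinf : ∀ z ∈ Dinf H c ∪ (starRingEnd ℂ) '' Dinf H c,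
      z.im ≠ 0 ∧ c * ∫ l, l ^ 2 / ‖(l : ℂ) - z‖ ^ 2 ∂H < 1 := by
    rintro z (hz | ⟨w, hw, rfl⟩)
    · exact ⟨hz.1.ne', mul_integral_sq_div_norm_sub_sq_lt_one H hz⟩
    · rw [integral_sq_div_norm_sub_conj]
      exact ⟨by simpa using hw.1.ne', mul_integral_sq_div_norm_sub_sq_lt_one H hw⟩
  refine ⟨fun z hz => mul_integral_sq_div_norm_sub_sq_lt_one H hz, fun z₁ hz₁ z₂ hz₂ => ?_⟩
  obtain ⟨hz₁_im, h₁⟩ := hDinf z₁ hz₁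
  obtain ⟨hz₂_im, h₂⟩ := hDinf z₂ hz₂
  exact norm_mul_integral_sq_div_mul_lt_one H hc.le hz₁_im hz₂_im h₁ h₂

theorem stmt17 (H : MeasureTheory.Measure ℝ) (hprob : IsProbabilityMeasure H)
    (hcomp : IsCompact (msupport H)) (hpos : msupport H ⊆ Set.Ici 0)
    (c : ℝ) (hc : 0 < c) :
    (∀ z ∈ Dinf H c,
      c * (∫ l, l ^ 2 / ‖(l : ℂ) - z‖ ^ 2 ∂H) < 1) ∧
    ∀ z₁ ∈ Dinf H c ∪ (starRingEnd ℂ) '' Dinf H c,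
      ∀ z₂ ∈ Dinf H c ∪ (starRingEnd ℂ) '' Dinf H c,
        ‖(c : ℂ) *
          ∫ l, (l : ℂ) ^ 2 / (((l : ℂ) - z₁) * ((l : ℂ) - z₂)) ∂H‖ < 1 :=
  stmt17_general H hprob c hc

end
end
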